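/- Let 0 < δ̃ < δ, let u be four times continuously differentiable with |u⁗| ≤ M, and let L_η denote the nonlocal operator with constant kernel 3/η³ and horizon η. Then |L_δ u(x) - L_{δ̃} u(x)| ≤ (M/20)·[(δ³ - δ̃³)·δ̃²/δ³ + (δ⁵ - δ̃⁵)/δ³]. -/

import Mathlib

/-!
Write `D z = u (x + z) - 2 u x + u (x - z)`. Taylor's theorem with Lagrange remainder at `x`,
applied at `x + z` and `x - z`, gives `|D z - u''(x) z²| ≤ M z⁴ / 12`. The weight `3 / η³` is
the one for which `∫₀^η (3 / η³) z² dz = 1`, so both operators reproduce `u''(x)` exactly and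
their difference only sees the quartic remainders: on the common range `(0, δ̃)` with weight
`3 / δ̃³ - 3 / δ³`, on the extra range `(δ̃, δ)` with weight `3 / δ³`.
-/

open MeasureTheory

theorem exists_taylor_lagrange_iteratedDeriv {f : ℝ → ℝ} {n : ℕ} (hf : ContDiff ℝ (n + 1) f)
    (x h : ℝ) :
    ∃ ξ, f (x + h) = ∑ k ∈ Finset.range (n + 1), iteratedDeriv k f x * h ^ k / k.factorial
      + iteratedDeriv (n + 1) f ξ * h ^ (n + 1) / (n + 1).factorial := by
  rcases eq_or_ne h 0 with rfl | hh
  · exact ⟨x, by simp [Finset.sum_range_succ']⟩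
  have hx : x ≠ x + h := by simpa using hh
  obtain ⟨ξ, -, hξ⟩ := taylor_mean_remainder_lagrange_iteratedDeriv hx hf.contDiffOn
  have htaylor : taylorWithinEval f n (Set.uIcc x (x + h)) x (x + h) =
      ∑ k ∈ Finset.range (n + 1), iteratedDeriv k f x * h ^ k / k.factorial := by
    rw [taylor_within_apply]
    refine Finset.sum_congr rfl fun k hk => ?_
    have hk' : (k : WithTop ℕ∞) ≤ n + 1 := by exact_mod_cast (Finset.mem_range.1 hk).le
    rw [iteratedDerivWithin_eq_iteratedDeriv (uniqueDiffOn_uIcc hx) (hf.contDiffAt.of_le hk')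
      Set.left_mem_uIcc, add_sub_cancel_left, smul_eq_mul]
    field_simp
  rw [htaylor, add_sub_cancel_left] at hξ
  exact ⟨ξ, by linarith⟩

theorem abs_second_difference_sub_le {u : ℝ → ℝ} {M : ℝ} (hu : ContDiff ℝ 4 u)
    (hM : ∀ y, |iteratedDeriv 4 u y| ≤ M) (x z : ℝ) :
    |u (x + z) - 2 * u x + u (x - z) - iteratedDeriv 2 u x * z ^ 2| ≤ M / 12 * z ^ 4 := by
  obtain ⟨ξp, hξp⟩ := exists_taylor_lagrange_iteratedDeriv (n := 3) hu x z
  obtain ⟨ξm, hξm⟩ := exists_taylor_lagrange_iteratedDeriv (n := 3) hu x (-z)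
  have hremainder : u (x + z) - 2 * u x + u (x - z) - iteratedDeriv 2 u x * z ^ 2 =
      (iteratedDeriv 4 u ξp + iteratedDeriv 4 u ξm) * z ^ 4 / 24 := by
    rw [sub_eq_add_neg x, hξp, hξm]
    simp [Finset.sum_range_succ, Nat.factorial]
    ring
  calc _ = |iteratedDeriv 4 u ξp + iteratedDeriv 4 u ξm| * z ^ 4 / 24 := by
        rw [hremainder, abs_div, abs_mul, abs_of_nonneg (by positivity : (0 : ℝ) ≤ z ^ 4)]
        norm_num
    _ ≤ (M + M) * z ^ 4 / 24 := by
        gcongr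
        exact (abs_add_le _ _).trans (add_le_add (hM ξp) (hM ξm))
    _ = M / 12 * z ^ 4 := by ring

noncomputable def kernelIntegral (η : ℝ) (g : ℝ → ℝ) : ℝ := ∫ z in (0 : ℝ)..η, 3 / η ^ 3 * g z

section

variable {g : ℝ → ℝ} {c K : ℝ}

theorem abs_integral_sub_sq_le (hg : ∀ z, |g z - c * z ^ 2| ≤ K * z ^ 4) {a b : ℝ}
    (hab : a ≤ b) : |∫ z in a..b, (g z - c * z ^ 2)| ≤ K * (b ^ 5 - a ^ 5) / 5 := by
  calc |∫ z in a..b, (g z - c * z ^ 2)| ≤ ∫ z in a..b, K * z ^ 4 :=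
        intervalIntegral.norm_integral_le_of_norm_le hab
          (ae_of_all _ fun z _ => (Real.norm_eq_abs _).trans_le (hg z))
          ((by fun_prop : Continuous fun z : ℝ => K * z ^ 4).intervalIntegrable a b)
    _ = K * (b ^ 5 - a ^ 5) / 5 := by
        rw [intervalIntegral.integral_const_mul, integral_pow]
        ring

theorem kernelIntegral_eq_add {η : ℝ} (hη : η ≠ 0) (hg : IntervalIntegrable g volume 0 η) :
    kernelIntegral η g = c + 3 / η ^ 3 * ∫ z in (0 : ℝ)..η, (g z - c * z ^ 2) := by
  rw [kernelIntegral, intervalIntegral.integral_const_mul, intervalIntegral.integral_sub hg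
    ((by fun_prop : Continuous fun z : ℝ => c * z ^ 2).intervalIntegrable 0 η),
    intervalIntegral.integral_const_mul, integral_pow]
  field_simp
  ring

theorem abs_kernelIntegral_sub_le (hg : Continuous g) (hK : ∀ z, |g z - c * z ^ 2| ≤ K * z ^ 4)
    {δ δt : ℝ} (hδt : 0 < δt) (hδ : δt < δ) :
    |kernelIntegral δ g - kernelIntegral δt g| ≤
      3 * K / 5 * ((δ ^ 3 - δt ^ 3) * δt ^ 2 / δ ^ 3 + (δ ^ 5 - δt ^ 5) / δ ^ 3) := by
  have hδ0 : 0 < δ := hδt.trans hδ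
  set R := fun z => g z - c * z ^ 2
  have hR : ∀ a b : ℝ, IntervalIntegrable R volume a b := fun a b =>
    (hg.sub (by fun_prop)).intervalIntegrable a b
  set E₁ := ∫ z in (0 : ℝ)..δt, R z
  set E₂ := ∫ z in δt..δ, R z
  have hE₁ : |E₁| ≤ K * δt ^ 5 / 5 := by
    simpa using abs_integral_sub_sq_le hK hδt.le
  have hE₂ : |E₂| ≤ K * (δ ^ 5 - δt ^ 5) / 5 := abs_integral_sub_sq_le hK hδ.le
  have hweights : 3 / δ ^ 3 ≤ 3 / δt ^ 3 := by gcongr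
  have hsplit : kernelIntegral δ g - kernelIntegral δt g =
      -((3 / δt ^ 3 - 3 / δ ^ 3) * E₁) + 3 / δ ^ 3 * E₂ := by
    rw [kernelIntegral_eq_add hδ0.ne' (hg.intervalIntegrable _ _),
      kernelIntegral_eq_add hδt.ne' (hg.intervalIntegrable _ _),
      ← intervalIntegral.integral_add_adjacent_intervals (hR 0 δt) (hR δt δ)]
    ring
  rw [hsplit]
  calc _ ≤ (3 / δt ^ 3 - 3 / δ ^ 3) * |E₁| + 3 / δ ^ 3 * |E₂| := by
        refine (abs_add_le _ _).trans_eq ?_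
        rw [abs_neg, abs_mul, abs_mul, abs_of_nonneg (sub_nonneg.2 hweights),
          abs_of_pos (by positivity : 0 < 3 / δ ^ 3)]
    _ ≤ (3 / δt ^ 3 - 3 / δ ^ 3) * (K * δt ^ 5 / 5)
          + 3 / δ ^ 3 * (K * (δ ^ 5 - δt ^ 5) / 5) := by
        gcongr
    _ = _ := by
        field_simp

end

theorem nonlocal_operator_horizon_perturbation (δ δt M x : ℝ)
    (hδt : 0 < δt) (hδ : δt < δ) (u : ℝ → ℝ)
    (hu : ContDiff ℝ 4 u)
    (hM : ∀ y, |iteratedDeriv 4 u y| ≤ M) :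
    |(∫ z in (0:ℝ)..δ, (3 / δ^3) * (u (x + z) - 2 * u x + u (x - z)))
      - (∫ z in (0:ℝ)..δt, (3 / δt^3) * (u (x + z) - 2 * u x + u (x - z)))|
      ≤ M / 20 * ((δ^3 - δt^3) * δt^2 / δ^3 + (δ^5 - δt^5) / δ^3) := by
  have hD : Continuous fun z => u (x + z) - 2 * u x + u (x - z) := by
    have := hu.continuous
    fun_prop
  calc _ ≤ 3 * (M / 12) / 5 * ((δ ^ 3 - δt ^ 3) * δt ^ 2 / δ ^ 3 + (δ ^ 5 - δt ^ 5) / δ ^ 3) :=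
        abs_kernelIntegral_sub_le hD (abs_second_difference_sub_le hu hM x) hδt hδ
    _ = _ := by ring
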